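/- arXiv:0711.1242 — 6 statements merged into one kernel-verified Lean document; each statement's English description precedes it below -/
import Mathlib

section
/- Let f : Fin n → ℝ be a nonnegative flow vector minimizing the social cost C(f) = Σ_j f_j·(a_j·f_j + b_j) subject to Σ_j f_j = d (with a_j, b_j ≥ 0 and d > 0). Then for any two links j, j' with f_j > 0 and f_{j'} > 0, the marginal costs are equal: 2·a_j·f_j + b_j = 2·a_{j'}·f_{j'} + b_{j'}. -/
/-!
If flow is moved from a used link `j` to a link `j'` in an amount `ε`, the social cost changes
by `ε (c_{j'} - c_j) + ε² (a_j + a_{j'})`, where `c_k = 2 a_k f_k + b_k` is the marginal cost.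
Optimality makes this nonnegative for all small `ε > 0`; dividing by `ε` and letting `ε → 0⁺`
gives `c_j ≤ c_{j'}`, and exchanging the roles of `j` and `j'` gives equality.
-/

open Filter Topology Finset Set

variable {ι : Type*}

def socialCost [Fintype ι] (a b g : ι → ℝ) : ℝ := ∑ k, g k * (a k * g k + b k)

def marginalCost (a b f : ι → ℝ) (k : ι) : ℝ := 2 * a k * f k + b k

def transfer [DecidableEq ι] (f : ι → ℝ) (j j' : ι) (ε : ℝ) : ι → ℝ :=
  f - Pi.single j ε + Pi.single j' ε

lemma sum_transfer [Fintype ι] [DecidableEq ι] (f : ι → ℝ) (j j' : ι) (ε : ℝ) :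
    ∑ k, transfer f j j' ε k = ∑ k, f k := by
  simp [transfer, sum_add_distrib, sum_sub_distrib]

lemma transfer_nonneg [DecidableEq ι] {f : ι → ℝ} {j : ι} {ε : ℝ} (j' : ι)
    (hf : ∀ k, 0 ≤ f k) (hε : 0 ≤ ε) (hεj : ε ≤ f j) (k : ι) :
    0 ≤ transfer f j j' ε k := by
  have hj : (Pi.single j ε : ι → ℝ) k ≤ f k := by
    rcases eq_or_ne k j with rfl | hk
    · simpa using hεj
    · simpa [hk] using hf k
  have hj' : 0 ≤ (Pi.single j' ε : ι → ℝ) k :=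
    (Pi.single_nonneg.mpr hε : 0 ≤ (Pi.single j' ε : ι → ℝ)) k
  simp only [transfer, Pi.add_apply, Pi.sub_apply]
  linarith

lemma socialCost_transfer [Fintype ι] [DecidableEq ι] (a b f : ι → ℝ) {j j' : ι}
    (hne : j ≠ j') (ε : ℝ) :
    socialCost a b (transfer f j j' ε) = socialCost a b f
      + ε * (marginalCost a b f j' - marginalCost a b f j) + ε ^ 2 * (a j + a j') := by
  rw [socialCost, socialCost, add_assoc, ← sub_eq_iff_eq_add', ← sum_sub_distrib,
    Fintype.sum_eq_add j j' hne fun k hk => by simp [transfer, hk.1, hk.2]]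
  simp only [transfer, Pi.add_apply, Pi.sub_apply, Pi.single_eq_same, Pi.single_eq_of_ne hne,
    Pi.single_eq_of_ne hne.symm, marginalCost]
  ring

lemma nonneg_of_forall_mul_add_sq_mul_nonneg {D c δ : ℝ} (hδ : 0 < δ)
    (h : ∀ ε ∈ Ioo 0 δ, 0 ≤ ε * D + ε ^ 2 * c) : 0 ≤ D := by
  have hlim : Tendsto (fun ε => D + ε * c) (𝓝[>] 0) (𝓝 D) :=
    ((by fun_prop : Continuous fun ε : ℝ => D + ε * c).tendsto' 0 D (by simp)).mono_left
      nhdsWithin_le_nhds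
  refine ge_of_tendsto hlim ?_
  filter_upwards [Ioo_mem_nhdsGT hδ] with ε hε
  nlinarith [h ε hε, hε.1]

lemma marginalCost_le_of_optimal [Fintype ι] [DecidableEq ι] {a b f : ι → ℝ} {d : ℝ}
    (hf : ∀ k, 0 ≤ f k) (hsum : ∑ k, f k = d)
    (hmin : ∀ g : ι → ℝ, (∀ k, 0 ≤ g k) → ∑ k, g k = d →
      socialCost a b f ≤ socialCost a b g)
    {j : ι} (hj : 0 < f j) (j' : ι) :
    marginalCost a b f j ≤ marginalCost a b f j' := by
  rcases eq_or_ne j j' with rfl | hne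
  · rfl
  rw [← sub_nonneg]
  refine nonneg_of_forall_mul_add_sq_mul_nonneg (c := a j + a j') hj fun ε hε => ?_
  have hopt := hmin (transfer f j j' ε) (transfer_nonneg j' hf hε.1.le hε.2.le)
    (by rw [sum_transfer, hsum])
  rw [socialCost_transfer a b f hne ε] at hopt
  linarith

theorem social_opt_equal_marginal_cost_general
    (n : ℕ) (a b f : Fin n → ℝ) (d : ℝ)
    (hf : ∀ j, 0 ≤ f j) (hsum : ∑ j, f j = d)
    (hmin : ∀ g : Fin n → ℝ, (∀ j, 0 ≤ g j) → ∑ j, g j = d →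
      ∑ j, f j * (a j * f j + b j) ≤ ∑ j, g j * (a j * g j + b j))
    (j j' : Fin n) (hj : 0 < f j) (hj' : 0 < f j') :
    2 * a j * f j + b j = 2 * a j' * f j' + b j' :=
  le_antisymm (marginalCost_le_of_optimal hf hsum hmin hj j')
    (marginalCost_le_of_optimal hf hsum hmin hj' j)

theorem social_opt_equal_marginal_cost
    (n : ℕ) (a b f : Fin n → ℝ) (d : ℝ)
    (ha : ∀ j, 0 ≤ a j) (hb : ∀ j, 0 ≤ b j) (hd : 0 < d)
    (hf : ∀ j, 0 ≤ f j) (hsum : ∑ j, f j = d)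
    (hmin : ∀ g : Fin n → ℝ, (∀ j, 0 ≤ g j) → ∑ j, g j = d →
      ∑ j, f j * (a j * f j + b j) ≤ ∑ j, g j * (a j * g j + b j))
    (j j' : Fin n) (hj : 0 < f j) (hj' : 0 < f j') :
    2 * a j * f j + b j = 2 * a j' * f j' + b j' :=
  social_opt_equal_marginal_cost_general n a b f d hf hsum hmin j j' hj hj'
end

section
/- Suppose f : Fin n → ℝ is a nonnegative vector and there is a constant c ≥ 0 such that 2·a_j·f_j + b_j = c for all j with f_j > 0, where a_j, b_j ≥ 0. Then for any two links j, j' with f_j > 0 and f_{j'} > 0, the latencies satisfy ℓ_{j'}(f_{j'}) ≤ 2·ℓ_j(f_j), where ℓ_j(x) = a_j·x + b_j (assuming ℓ_j(f_j) > 0). -/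
theorem latencies_within_factor_two
    (n : ℕ) (a b f : Fin n → ℝ) (c : ℝ)
    (ha : ∀ j, 0 ≤ a j) (hb : ∀ j, 0 ≤ b j)
    (hf : ∀ j, 0 ≤ f j) (hc : 0 ≤ c)
    (hmarg : ∀ j, 0 < f j → 2 * a j * f j + b j = c)
    (j j' : Fin n) (hj : 0 < f j) (hj' : 0 < f j')
    (hpos : 0 < a j * f j + b j) :
    a j' * f j' + b j' ≤ 2 * (a j * f j + b j) := by
  have h1 := hmarg j hj
  have h2 := hmarg j' hj'
  nlinarith [mul_nonneg (ha j') (hf j'), mul_nonneg (ha j) (hf j), hb j, hb j']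
end

section
/- Consider real numbers ℓ_min > 0, α ∈ [0,1], and C_SE ∈ [ℓ_min, 2·ℓ_min]. Suppose C1 ≤ min(2·α·ℓ_min, C_SE − (1−α)·ℓ_min) and C2 ≤ min(C_SE − α·ℓ_min, 2·(1−α)·ℓ_min). Then C1 + C2 ≤ (4/3)·C_SE. -/
theorem four_thirds_bound
    (lmin α CSE C1 C2 : ℝ)
    (hl : 0 < lmin) (hα0 : 0 ≤ α) (hα1 : α ≤ 1)
    (hCSE1 : lmin ≤ CSE) (hCSE2 : CSE ≤ 2 * lmin)
    (hC1 : C1 ≤ min (2 * α * lmin) (CSE - (1 - α) * lmin))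
    (hC2 : C2 ≤ min (CSE - α * lmin) (2 * (1 - α) * lmin)) :
    C1 + C2 ≤ (4 / 3) * CSE := by
  have h1a := le_trans hC1 (min_le_left _ _)
  have h1b := le_trans hC1 (min_le_right _ _)
  have h2a := le_trans hC2 (min_le_left _ _)
  have h2b := le_trans hC2 (min_le_right _ _)
  rcases le_total ((3/2) * lmin) CSE with h | h
  · linarith
  · linarith
end

section
/- Let a1, a2, b1, b2, r be nonnegative reals with a1 + a2 > 0, r > 0, satisfying the feasibility constraints 2a1 + b1 − b2 ≥ 0, 2a2 − b1 + b2 ≥ 0, 3a1·r + b1 − b2 ≥ 0, 3a2·r − b1 + b2 ≥ 0. Define N = 9(1+r)(a2·b1 + a1(a2 + b2 + a2·r)) − 2(b1 − b2)² and S = 16(1+r)(a2·b1 + a1(a2 + b2 + a2·r)) − 3(b1 − b2)². Then, provided N > 0, the ratio (9·S)/(16·N) is at most 93/88. -/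
theorem lower_bound_ratio_max
    (a1 a2 b1 b2 r : ℝ)
    (ha1 : 0 ≤ a1) (ha2 : 0 ≤ a2) (hb1 : 0 ≤ b1) (hb2 : 0 ≤ b2)
    (hsum : 0 < a1 + a2) (hr : 0 < r)
    (h1 : 0 ≤ 2 * a1 + b1 - b2) (h2 : 0 ≤ 2 * a2 - b1 + b2)
    (h3 : 0 ≤ 3 * a1 * r + b1 - b2) (h4 : 0 ≤ 3 * a2 * r - b1 + b2)
    (N S : ℝ)
    (hN : N = 9 * (1 + r) * (a2 * b1 + a1 * (a2 + b2 + a2 * r)) - 2 * (b1 - b2) ^ 2)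
    (hS : S = 16 * (1 + r) * (a2 * b1 + a1 * (a2 + b2 + a2 * r)) - 3 * (b1 - b2) ^ 2)
    (hNpos : 0 < N) :
    (9 * S) / (16 * N) ≤ 93 / 88 := by
  have key : 5 * (b1 - b2) ^ 2 ≤ 6 * (1 + r) * (a2 * b1 + a1 * (a2 + b2 + a2 * r)) := by
    rcases le_total b2 b1 with h | h
    · nlinarith [mul_nonneg (sub_nonneg.2 h) h2, mul_nonneg (sub_nonneg.2 h) h4,
        mul_nonneg ha2 hb2, mul_nonneg (mul_nonneg ha2 hb2) hr.le,
        mul_nonneg ha1 (add_nonneg (add_nonneg ha2 hb2) (mul_nonneg ha2 hr.le)),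
        mul_nonneg (mul_nonneg ha2 (sub_nonneg.2 h)) hr.le,
        mul_nonneg (mul_nonneg ha1 ha2) hr.le, mul_nonneg ha1 hb2]
    · nlinarith [mul_nonneg (sub_nonneg.2 h) h1, mul_nonneg (sub_nonneg.2 h) h3,
        mul_nonneg ha1 hb1, mul_nonneg (mul_nonneg ha1 hb2) hr.le,
        mul_nonneg ha2 hb1, mul_nonneg (mul_nonneg ha1 (sub_nonneg.2 h)) hr.le,
        mul_nonneg (mul_nonneg ha1 ha2) hr.le, mul_nonneg ha1 hb2]
  rw [div_le_div_iff₀ (by linarith) (by norm_num)]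
  nlinarith [key]
end

section
/- Let ℓ_min > 0, α ∈ [0.483, 0.517], C_SE ∈ [1.474·ℓ_min, 1.513·ℓ_min]. If C1 ≤ 1.915·α·ℓ_min and C2 ≤ min(C_SE − α·ℓ_min, 2·(1−α)·ℓ_min), then (C1 + C2)/C_SE ≤ 1.322. -/
theorem dlp_holds_bound
    (lmin α CSE C1 C2 : ℝ)
    (hl : 0 < lmin) (hα1 : 0.483 ≤ α) (hα2 : α ≤ 0.517)
    (hCSE1 : 1.474 * lmin ≤ CSE) (hCSE2 : CSE ≤ 1.513 * lmin)
    (hC1 : C1 ≤ 1.915 * α * lmin)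
    (hC2 : C2 ≤ min (CSE - α * lmin) (2 * (1 - α) * lmin)) :
    (C1 + C2) / CSE ≤ 1.322 := by
  have hC2' : C2 ≤ CSE - α * lmin := le_trans hC2 (min_le_left _ _)
  have hCSE0 : 0 < CSE := lt_of_lt_of_le (by nlinarith) hCSE1
  rw [div_le_iff₀ hCSE0]
  nlinarith [mul_le_mul_of_nonneg_right hα2 hl.le]
end

section
/- Let ℓ_min > 0, α ∈ [0.483, 0.517], C_SE ∈ [1.474·ℓ_min, 1.513·ℓ_min]. If C1 ≤ max(C_SE − ℓ_min/4 − 1.16·ℓ_min·(3/4 − α), ℓ_min/2 + (α − 1/4)·1.84·ℓ_min) and C2 ≤ min(C_SE − α·ℓ_min, 2·(1−α)·ℓ_min), then (C1 + C2)/C_SE ≤ 1.322. -/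
theorem dlp_fails_bound
    (lmin α CSE C1 C2 : ℝ)
    (hl : 0 < lmin) (hα1 : 0.483 ≤ α) (hα2 : α ≤ 0.517)
    (hCSE1 : 1.474 * lmin ≤ CSE) (hCSE2 : CSE ≤ 1.513 * lmin)
    (hC1 : C1 ≤ max (CSE - lmin / 4 - 1.16 * lmin * (3 / 4 - α))
                    (lmin / 2 + (α - 1 / 4) * 1.84 * lmin))
    (hC2 : C2 ≤ min (CSE - α * lmin) (2 * (1 - α) * lmin)) :
    (C1 + C2) / CSE ≤ 1.322 := by
  have hCSE : 0 < CSE := lt_of_lt_of_le (by nlinarith) hCSE1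
  rw [div_le_iff₀ hCSE]
  rcases max_cases (CSE - lmin / 4 - 1.16 * lmin * (3 / 4 - α))
      (lmin / 2 + (α - 1 / 4) * 1.84 * lmin) with ⟨h, _⟩ | ⟨h, _⟩ <;>
    rw [h] at hC1
  · have h2 := le_trans hC2 (min_le_right _ _)
    nlinarith
  · have h2 := le_trans hC2 (min_le_left _ _)
    nlinarith
end
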